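/- arXiv:1504.02243 — 4 statements merged into one kernel-verified Lean document; each statement's English description precedes it below -/
import Mathlib

section
/- Let r ≥ 2 and let H = H^(i) be a sequence of r-uniform hypergraphs on n = n(i) vertices with maximum degree Δ = Δ(H) and e(H) = α·C(n,r) edges, and let p = p(n) : ℕ → [0,1). Suppose that α·C(n,r) > n/r, p·C(n,r) → ∞, and n·p^{γ(H)}·Δ^{-4} → ∞. Then as n → ∞: (i) n^{(3−2r)/2}·p^{-1}·Δ^{4r−6} → 0 and Δ = o(n^{1/4}); (ii) α³·C(n,r)·p^{-2} = o(1); (iii) α·p^{-1}·Δ = o(n^{-1/2}), p^{-1}·Δ²·n^{2−r} = o(n^{1/2}), and p^{-1}·α²·C(n,r) = o(n^{1/2}). -/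
open Finset Filter Asymptotics
open scoped Classical

def maxDeg {V : Type*} [Fintype V] [DecidableEq V] (H : Finset (Finset V)) : ℕ :=
  Finset.univ.sup (fun v => (H.filter (fun e => v ∈ e)).card)

def UniformH {V : Type*} (r : ℕ) (H : Finset (Finset V)) : Prop := ∀ e ∈ H, e.card = r

def eHmax {n : ℕ} (H : Finset (Finset (Fin n))) (v : ℕ) : ℕ :=
  (Finset.powersetCard v (Finset.univ : Finset (Fin n))).sup
    (fun W => (H.filter (fun e => e ⊆ W)).card)

noncomputable def gammaH {n : ℕ} (r : ℕ) (H : Finset (Finset (Fin n))) : ℝ :=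
  sSup ((fun v : ℕ => (eHmax H v : ℝ) / ((v : ℝ) - 2)) '' Set.Icc (r + 1) n)

/-!
Double counting gives `r e(H) ≤ n Δ`, so `e(H) > n / r` forces `Δ ≥ 2`, and two edges through a
vertex of maximum degree span at most `2r - 1` vertices, whence `γ ≥ 2 / (2r - 3)`. With
`s = (2r - 3) / 2` this says `γ s ≥ 1`, so `p < 1` gives `p⁻¹ ≤ (p ^ γ) ^ (-s)`; in terms of
`T = n p^γ Δ^(-4) → ∞` this is `n^(-s) p⁻¹ Δ^(4s) ≤ T^(-s)`, the first half of (i), while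
`p^γ ≤ 1` gives `Δ⁴ ≤ n / T`. Finally `e(H) ≤ n Δ` and `C(n, r) ≥ (n / 2r)^r` bound the quantity
of (ii) by a constant times `q²`, and those of (iii), divided by their comparison functions, by a
constant times `q`, where `q = n^(-s) p⁻¹ Δ²` is at most the quantity in (i).
-/

open Real

lemma two_mul_cast_sub_three_pos {r : ℕ} (hr : 2 ≤ r) : (0 : ℝ) < 2 * r - 3 := by
  have : (2 : ℝ) ≤ r := by exact_mod_cast hr
  linarith

lemma div_pow_le_choose {n r : ℕ} (h : 2 * r ≤ n) : ((n : ℝ) / (2 * r)) ^ r ≤ n.choose r := by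
  have hsub : (n : ℝ) / 2 ≤ ((n + 1 - r : ℕ) : ℝ) := by
    rw [Nat.cast_sub (by omega)]; push_cast
    have : (2 * r : ℝ) ≤ n := by exact_mod_cast h
    linarith
  have hfac : (r.factorial : ℝ) ≤ (r : ℝ) ^ r := by exact_mod_cast Nat.factorial_le_pow r
  calc ((n : ℝ) / (2 * r)) ^ r = ((n : ℝ) / 2) ^ r / (r : ℝ) ^ r := by
        rw [← div_pow, div_div, mul_comm]
    _ ≤ ((n + 1 - r : ℕ) : ℝ) ^ r / r.factorial :=
        div_le_div₀ (by positivity) (pow_le_pow_left₀ (by positivity) hsub r)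
          (by exact_mod_cast r.factorial_pos) hfac
    _ ≤ n.choose r := Nat.pow_le_choose r n

namespace UniformH

variable {V : Type*} [DecidableEq V] {r : ℕ} {H : Finset (Finset V)}

lemma card_union_le {e₁ e₂ : Finset V} {v : V} (hH : UniformH r H) (he₁ : e₁ ∈ H) (he₂ : e₂ ∈ H)
    (hv₁ : v ∈ e₁) (hv₂ : v ∈ e₂) : #(e₁ ∪ e₂) ≤ 2 * r - 1 := by
  have := card_union_add_card_inter e₁ e₂
  have := card_pos.mpr ⟨v, mem_inter.mpr ⟨hv₁, hv₂⟩⟩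
  rw [hH e₁ he₁, hH e₂ he₂] at *
  omega

variable [Fintype V]

lemma card_filter_mem_le_maxDeg (H : Finset (Finset V)) (v : V) :
    #{e ∈ H | v ∈ e} ≤ maxDeg H :=
  le_sup (f := fun v => #{e ∈ H | v ∈ e}) (mem_univ v)

lemma mul_card_le_card_mul_maxDeg (hH : UniformH r H) :
    r * #H ≤ Fintype.card V * maxDeg H :=
  calc r * #H = ∑ e ∈ H, #e := by rw [sum_congr rfl hH, sum_const, smul_eq_mul, mul_comm]
    _ ≤ Fintype.card V * maxDeg H := sum_card_le (card_filter_mem_le_maxDeg H)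

lemma card_le_card_mul_maxDeg (hH : UniformH r H) (hr : 1 ≤ r) :
    (#H : ℝ) ≤ Fintype.card V * maxDeg H := by
  exact_mod_cast (Nat.le_mul_of_pos_left _ hr).trans hH.mul_card_le_card_mul_maxDeg

lemma two_le_maxDeg (hH : UniformH r H) (h : Fintype.card V < r * #H) : 2 ≤ maxDeg H := by
  have := hH.mul_card_le_card_mul_maxDeg
  by_contra! hΔ
  have : Fintype.card V * maxDeg H ≤ Fintype.card V * 1 := Nat.mul_le_mul_left _ (by omega)
  omega

lemma exists_pair_of_two_le_maxDeg (h : 2 ≤ maxDeg H) :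
    ∃ v, ∃ e₁ ∈ H, ∃ e₂ ∈ H, e₁ ≠ e₂ ∧ v ∈ e₁ ∧ v ∈ e₂ := by
  have hne : (univ : Finset V).Nonempty := by
    by_contra! h'
    simp [maxDeg, h'] at h
  obtain ⟨v, -, hv⟩ := exists_mem_eq_sup univ hne fun v => #{e ∈ H | v ∈ e}
  obtain ⟨e₁, he₁, e₂, he₂, hne⟩ := one_lt_card.mp (show 1 < #{e ∈ H | v ∈ e} by
    unfold maxDeg at h; omega)
  rw [mem_filter] at he₁ he₂
  exact ⟨v, e₁, he₁.1, e₂, he₂.1, hne, he₁.2, he₂.2⟩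

lemma card_div_choose_le (hH : UniformH r H) (hr : 1 ≤ r) (hn : 2 * r ≤ Fintype.card V) :
    (#H : ℝ) / (Fintype.card V).choose r ≤
      (2 * r) ^ r * maxDeg H * (Fintype.card V : ℝ) ^ (1 - (r : ℝ)) := by
  have hV : (0 : ℝ) < Fintype.card V := by exact_mod_cast (show 0 < Fintype.card V by omega)
  have hr0 : (0 : ℝ) < r := by exact_mod_cast hr
  calc (#H : ℝ) / (Fintype.card V).choose r
      ≤ Fintype.card V * maxDeg H / ((Fintype.card V : ℝ) / (2 * r)) ^ r :=
        div_le_div₀ (by positivity) (hH.card_le_card_mul_maxDeg hr) (by positivity)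
          (div_pow_le_choose hn)
    _ = _ := by
        rw [rpow_sub hV, rpow_one, rpow_natCast, div_pow]
        field_simp

end UniformH

section MaxEdges

variable {n r : ℕ} {H : Finset (Finset (Fin n))}

lemma card_le_eHmax {F : Finset (Finset (Fin n))} {v : ℕ} (hF : F ⊆ H) (hv : #(F.sup id) ≤ v)
    (hvn : v ≤ n) : #F ≤ eHmax H v := by
  obtain ⟨W, hFW, hW⟩ := exists_superset_card_eq hv (by simpa using hvn)
  calc #F ≤ #{e ∈ H | e ⊆ W} :=
        card_le_card fun e he => mem_filter.mpr ⟨hF he, (le_sup (f := id) he).trans hFW⟩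
    _ ≤ eHmax H v := le_sup (f := fun W => #{e ∈ H | e ⊆ W}) (mem_powersetCard_univ.mpr hW)

lemma UniformH.two_le_eHmax (hH : UniformH r H) (hΔ : 2 ≤ maxDeg H) (hn : 2 * r - 1 ≤ n) :
    2 ≤ eHmax H (2 * r - 1) := by
  obtain ⟨v, e₁, he₁, e₂, he₂, hne, hv₁, hv₂⟩ := UniformH.exists_pair_of_two_le_maxDeg hΔ
  calc 2 = #{e₁, e₂} := (card_pair hne).symm
    _ ≤ eHmax H (2 * r - 1) := card_le_eHmax (by simp [insert_subset_iff, he₁, he₂])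
        (by simpa using hH.card_union_le he₁ he₂ hv₁ hv₂) hn

lemma div_le_gammaH {v : ℕ} (hv : v ∈ Set.Icc (r + 1) n) :
    (eHmax H v : ℝ) / (v - 2) ≤ gammaH r H :=
  le_csSup ((Set.finite_Icc _ _).image _).bddAbove (Set.mem_image_of_mem _ hv)

lemma UniformH.two_div_le_gammaH (hr : 2 ≤ r) (hH : UniformH r H) (hΔ : 2 ≤ maxDeg H)
    (hn : 2 * r - 1 ≤ n) : 2 / (2 * r - 3) ≤ gammaH r H := by
  have hv : ((2 * r - 1 : ℕ) : ℝ) - 2 = 2 * r - 3 := by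
    rw [Nat.cast_sub (by omega)]; push_cast; ring
  have h2 : (2 : ℝ) ≤ eHmax H (2 * r - 1) := by exact_mod_cast hH.two_le_eHmax hΔ hn
  calc (2 : ℝ) / (2 * r - 3) ≤ eHmax H (2 * r - 1) / (2 * r - 3) := by
        gcongr
        exact (two_mul_cast_sub_three_pos hr).le
    _ ≤ gammaH r H := hv ▸ div_le_gammaH ⟨by omega, hn⟩

end MaxEdges

lemma UniformH.pointwise_bounds {n r : ℕ} {H : Finset (Finset (Fin n))} {p : ℝ} (hH : UniformH r H)
    (hr : 2 ≤ r) (hn : 2 * r ≤ n) (hedge : (n : ℝ) / r < #H) (hp : 0 ≤ p)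
    (hT : 0 < n * p ^ gammaH r H * (maxDeg H : ℝ) ^ (-4 : ℤ)) :
    (0 : ℝ) < n ∧ (1 : ℝ) ≤ maxDeg H ∧ 0 < p ∧ 2 / (2 * r - 3) ≤ gammaH r H ∧
      (0 : ℝ) < n.choose r ∧ (#H : ℝ) ≤ n * maxDeg H ∧
      (#H : ℝ) / n.choose r ≤ (2 * r) ^ r * maxDeg H * (n : ℝ) ^ (1 - (r : ℝ)) := by
  have hΔ : 2 ≤ maxDeg H := hH.two_le_maxDeg (by
    have := (div_lt_iff₀' (by positivity : (0 : ℝ) < r)).mp hedge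
    simpa using (show n < r * #H by exact_mod_cast this))
  have hγ := hH.two_div_le_gammaH hr hΔ (by omega)
  have hγ0 : 0 < gammaH r H := (div_pos two_pos (two_mul_cast_sub_three_pos hr)).trans_le hγ
  refine ⟨by exact_mod_cast (show 0 < n by omega), by exact_mod_cast hΔ.trans' one_le_two,
    hp.lt_of_ne' fun h => by simp [h, zero_rpow hγ0.ne'] at hT, hγ,
    by exact_mod_cast Nat.choose_pos (show r ≤ n by omega), ?_, ?_⟩
  · simpa using hH.card_le_card_mul_maxDeg (by omega)
  · simpa using hH.card_div_choose_le (by omega) (by simpa using hn)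

lemma inv_le_inv_rpow_rpow {p γ s : ℝ} (hp0 : 0 < p) (hp1 : p ≤ 1) (hγs : 1 ≤ γ * s) :
    p⁻¹ ≤ ((p ^ γ)⁻¹) ^ s := by
  rw [inv_rpow (rpow_nonneg hp0.le _), ← rpow_mul hp0.le, ← rpow_neg hp0.le, ← rpow_neg_one]
  exact rpow_le_rpow_of_exponent_ge hp0 hp1 (by linarith)

lemma rpow_mul_inv_mul_pow_le {x d p γ : ℝ} {r : ℕ} (hr : 2 ≤ r) (hx : 0 < x) (hd : 0 < d)
    (hp0 : 0 < p) (hp1 : p ≤ 1) (hγ : 2 / (2 * r - 3) ≤ γ) :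
    x ^ (((3 : ℝ) - 2 * r) / 2) * p⁻¹ * d ^ (4 * r - 6) ≤
      (x * p ^ γ * d ^ (-4 : ℤ)) ^ (-((2 * (r : ℝ) - 3) / 2)) := by
  have hr3 := two_mul_cast_sub_three_pos hr
  have hγs : 1 ≤ γ * ((2 * r - 3) / 2) :=
    calc (1 : ℝ) = 2 / (2 * r - 3) * ((2 * r - 3) / 2) := by field_simp
      _ ≤ γ * ((2 * r - 3) / 2) := by gcongr
  have hinv : (x * p ^ γ * d ^ (-4 : ℤ))⁻¹ = x⁻¹ * (p ^ γ)⁻¹ * d ^ 4 := by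
    rw [zpow_neg, mul_inv, mul_inv, inv_inv]; norm_cast
  have hxs : (x⁻¹) ^ ((2 * (r : ℝ) - 3) / 2) = x ^ (((3 : ℝ) - 2 * r) / 2) := by
    rw [inv_rpow hx.le, ← rpow_neg hx.le]; ring_nf
  have hds : (d ^ 4) ^ ((2 * (r : ℝ) - 3) / 2) = d ^ (4 * r - 6) := by
    rw [← rpow_natCast, ← rpow_mul hd.le, ← rpow_natCast]
    congr 1
    rw [Nat.cast_sub (by omega)]; push_cast; ring
  rw [rpow_neg (by positivity), ← inv_rpow (by positivity), hinv,
    mul_rpow (by positivity) (by positivity), mul_rpow (by positivity) (by positivity), hxs, hds]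
  gcongr
  exact inv_le_inv_rpow_rpow hp0 hp1 hγs

lemma rpow_mul_inv_mul_sq_le {x d p γ : ℝ} {r : ℕ} (hr : 2 ≤ r) (hx : 0 < x) (hd : 1 ≤ d)
    (hp0 : 0 < p) (hp1 : p ≤ 1) (hγ : 2 / (2 * r - 3) ≤ γ) :
    x ^ (((3 : ℝ) - 2 * r) / 2) * p⁻¹ * d ^ 2 ≤
      (x * p ^ γ * d ^ (-4 : ℤ)) ^ (-((2 * (r : ℝ) - 3) / 2)) :=
  (mul_le_mul_of_nonneg_left (pow_le_pow_right₀ hd (by omega)) (by positivity)).trans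
    (rpow_mul_inv_mul_pow_le hr hx (by positivity) hp0 hp1 hγ)

lemma le_rpow_neg_mul_rpow {x d p γ : ℝ} (hx : 0 < x) (hd : 0 < d) (hp0 : 0 < p) (hp1 : p ≤ 1)
    (hγ : 0 ≤ γ) : d ≤ (x * p ^ γ * d ^ (-4 : ℤ)) ^ (-(1 / 4 : ℝ)) * x ^ (1 / 4 : ℝ) := by
  have hpγ : 0 < p ^ γ := rpow_pos_of_pos hp0 γ
  have hmul : (x * p ^ γ * d ^ (-4 : ℤ))⁻¹ * x = d ^ 4 * (p ^ γ)⁻¹ := by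
    rw [zpow_neg]; field_simp
  rw [rpow_neg (by positivity), ← inv_rpow (by positivity), ← mul_rpow (by positivity) hx.le, hmul]
  calc d = (d ^ 4) ^ (1 / 4 : ℝ) := by
        rw [← rpow_natCast, ← rpow_mul hd.le]; norm_num
    _ ≤ (d ^ 4 * (p ^ γ)⁻¹) ^ (1 / 4 : ℝ) := by
        gcongr
        exact le_mul_of_one_le_right (by positivity)
          (one_le_inv_iff₀.mpr ⟨hpγ, rpow_le_one hp0.le hp1 hγ⟩)

section Density

variable {x d p e N c ρ : ℝ}

lemma div_mul_inv_mul_le (hx : 0 < x) (hd : 0 ≤ d) (hp : 0 ≤ p)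
    (hdens : e / N ≤ c * d * x ^ (1 - ρ)) :
    e / N * p⁻¹ * d ≤ c * (x ^ ((3 - 2 * ρ) / 2) * p⁻¹ * d ^ 2) * x ^ (-(1 : ℝ) / 2) := by
  have hx' : x ^ (1 - ρ) = x ^ ((3 - 2 * ρ) / 2) * x ^ (-(1 : ℝ) / 2) := by
    rw [← rpow_add hx]; ring_nf
  calc e / N * p⁻¹ * d ≤ c * d * x ^ (1 - ρ) * p⁻¹ * d := by gcongr
    _ = _ := by rw [hx']; ring

lemma inv_mul_div_sq_mul_le (hx : 0 < x) (hN : 0 < N) (hd : 0 ≤ d) (hp : 0 ≤ p) (hc : 0 ≤ c)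
    (he0 : 0 ≤ e) (he : e ≤ x * d) (hdens : e / N ≤ c * d * x ^ (1 - ρ)) :
    p⁻¹ * (e / N) ^ 2 * N ≤ c * (x ^ ((3 - 2 * ρ) / 2) * p⁻¹ * d ^ 2) * x ^ ((1 : ℝ) / 2) := by
  have hx' : x ^ (1 - ρ) * x = x ^ ((3 - 2 * ρ) / 2) * x ^ ((1 : ℝ) / 2) := by
    rw [← rpow_add_one hx.ne', ← rpow_add hx]; ring_nf
  calc p⁻¹ * (e / N) ^ 2 * N = p⁻¹ * (e / N) * e := by field_simp
    _ ≤ p⁻¹ * (c * d * x ^ (1 - ρ)) * (x * d) := by gcongr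
    _ = _ := by linear_combination (p⁻¹ * c * d ^ 2) * hx'

lemma div_cube_mul_mul_inv_sq_le (hx : 0 < x) (hN : 0 < N) (hd : 1 ≤ d) (he0 : 0 ≤ e)
    (he : e ≤ x * d) (hdens : e / N ≤ c * d * x ^ (1 - ρ)) :
    (e / N) ^ 3 * N * (p⁻¹) ^ 2 ≤ c ^ 2 * (x ^ ((3 - 2 * ρ) / 2) * p⁻¹ * d ^ 2) ^ 2 := by
  have hx' : (x ^ (1 - ρ)) ^ 2 * x = (x ^ ((3 - 2 * ρ) / 2)) ^ 2 := by
    rw [← rpow_natCast, ← rpow_natCast, ← rpow_mul hx.le, ← rpow_mul hx.le,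
      ← rpow_add_one hx.ne']; ring_nf
  calc (e / N) ^ 3 * N * (p⁻¹) ^ 2 = (e / N) ^ 2 * e * (p⁻¹) ^ 2 := by field_simp
    _ ≤ (c * d * x ^ (1 - ρ)) ^ 2 * (x * d) * (p⁻¹) ^ 2 := by gcongr
    _ = c ^ 2 * ((x ^ (1 - ρ)) ^ 2 * x) * (p⁻¹) ^ 2 * d ^ 3 := by ring
    _ ≤ c ^ 2 * ((x ^ (1 - ρ)) ^ 2 * x) * (p⁻¹) ^ 2 * d ^ 4 := by
        gcongr
        norm_num
    _ = _ := by rw [hx']; ring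

lemma inv_mul_sq_mul_rpow_eq (hx : 0 < x) :
    p⁻¹ * d ^ 2 * x ^ (2 - ρ) = x ^ ((3 - 2 * ρ) / 2) * p⁻¹ * d ^ 2 * x ^ ((1 : ℝ) / 2) := by
  have hx' : x ^ (2 - ρ) = x ^ ((3 - 2 * ρ) / 2) * x ^ ((1 : ℝ) / 2) := by
    rw [← rpow_add hx]; ring_nf
  rw [hx']; ring

end Density

lemma tendsto_zero_of_eventually_le {α : Type*} {l : Filter α} {f b : α → ℝ}
    (hb : Tendsto b l (nhds 0)) (hfb : ∀ᶠ x in l, 0 ≤ f x ∧ f x ≤ b x) : Tendsto f l (nhds 0) :=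
  squeeze_zero' (hfb.mono fun _ => And.left) (hfb.mono fun _ => And.right) hb

lemma isLittleO_of_eventually_le_mul {α : Type*} {l : Filter α} {f g b : α → ℝ}
    (hb : Tendsto b l (nhds 0))
    (hfg : ∀ᶠ x in l, 0 ≤ f x ∧ f x ≤ b x * g x) : f =o[l] g := by
  have hbg : (fun x => b x * g x) =o[l] g := by
    simpa using ((isLittleO_one_iff ℝ).2 hb).mul_isBigO (isBigO_refl g l)
  refine (IsBigO.of_bound' ?_).trans_isLittleO hbg
  filter_upwards [hfg] with x ⟨h0, h1⟩
  rw [Real.norm_of_nonneg h0]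
  exact h1.trans (Real.le_norm_self _)

theorem estimates_lemma_general
    (r : ℕ) (hr : 2 ≤ r)
    (nseq : ℕ → ℕ) (hn : Tendsto nseq atTop atTop)
    (H : ∀ i : ℕ, Finset (Finset (Fin (nseq i))))
    (hunif : ∀ i, UniformH r (H i))
    (p : ℕ → ℝ) (hp : ∀ i, 0 ≤ p i ∧ p i < 1)
    (hedge : ∀ i, (nseq i : ℝ) / r < ((H i).card : ℝ))
    (hcond : Tendsto
      (fun i => (nseq i : ℝ) * p i ^ gammaH r (H i) * (maxDeg (H i) : ℝ) ^ (-4 : ℤ))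
      atTop atTop) :
    Tendsto (fun i => (nseq i : ℝ) ^ (((3 : ℝ) - 2 * r) / 2) * (p i)⁻¹ *
        (maxDeg (H i) : ℝ) ^ (4 * r - 6)) atTop (nhds 0) ∧
    (fun i => (maxDeg (H i) : ℝ)) =o[atTop] (fun i => (nseq i : ℝ) ^ ((1 : ℝ) / 4)) ∧
    Tendsto (fun i => (((H i).card : ℝ) / (Nat.choose (nseq i) r : ℝ)) ^ 3 *
        (Nat.choose (nseq i) r : ℝ) * ((p i)⁻¹) ^ 2) atTop (nhds 0) ∧
    (fun i => ((H i).card : ℝ) / (Nat.choose (nseq i) r : ℝ) * (p i)⁻¹ * (maxDeg (H i) : ℝ))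
      =o[atTop] (fun i => (nseq i : ℝ) ^ (-(1 : ℝ) / 2)) ∧
    (fun i => (p i)⁻¹ * (maxDeg (H i) : ℝ) ^ 2 * (nseq i : ℝ) ^ ((2 : ℝ) - r))
      =o[atTop] (fun i => (nseq i : ℝ) ^ ((1 : ℝ) / 2)) ∧
    (fun i => (p i)⁻¹ * (((H i).card : ℝ) / (Nat.choose (nseq i) r : ℝ)) ^ 2 *
        (Nat.choose (nseq i) r : ℝ))
      =o[atTop] (fun i => (nseq i : ℝ) ^ ((1 : ℝ) / 2)) := by
  have hr3 := two_mul_cast_sub_three_pos hr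
  set T : ℕ → ℝ := fun i => (nseq i : ℝ) * p i ^ gammaH r (H i) * (maxDeg (H i) : ℝ) ^ (-4 : ℤ)
  set c : ℝ := (2 * r) ^ r
  have hTpow : ∀ u : ℝ, 0 < u → Tendsto (T · ^ (-u)) atTop (nhds 0) :=
    fun u hu => (tendsto_rpow_neg_atTop hu).comp hcond
  have hfacts : ∀ᶠ i in atTop, (0 : ℝ) < nseq i ∧ (1 : ℝ) ≤ maxDeg (H i) ∧ 0 < p i ∧
      2 / (2 * r - 3) ≤ gammaH r (H i) ∧ (0 : ℝ) < (nseq i).choose r ∧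
      (#(H i) : ℝ) ≤ nseq i * maxDeg (H i) ∧
      (#(H i) : ℝ) / (nseq i).choose r ≤ c * maxDeg (H i) * (nseq i : ℝ) ^ (1 - (r : ℝ)) := by
    filter_upwards [hn.eventually_ge_atTop (2 * r), hcond.eventually_gt_atTop 0] with i hi hT
    exact (hunif i).pointwise_bounds hr hi (hedge i) (hp i).1 hT
  have hq : Tendsto (fun i => (nseq i : ℝ) ^ (((3 : ℝ) - 2 * r) / 2) * (p i)⁻¹ *
      (maxDeg (H i) : ℝ) ^ 2) atTop (nhds 0) :=
    tendsto_zero_of_eventually_le (hTpow _ (half_pos hr3)) (hfacts.mono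
      fun i ⟨hx, hΔ, hp0, hγ, _⟩ => ⟨by positivity,
        rpow_mul_inv_mul_sq_le hr hx hΔ hp0 (hp i).2.le hγ⟩)
  refine ⟨tendsto_zero_of_eventually_le (hTpow _ (half_pos hr3)) (hfacts.mono
      fun i ⟨hx, hΔ, hp0, hγ, _⟩ => ⟨by positivity,
        rpow_mul_inv_mul_pow_le hr hx (by positivity) hp0 (hp i).2.le hγ⟩),
    isLittleO_of_eventually_le_mul (hTpow (1 / 4) (by norm_num)) (hfacts.mono
      fun i ⟨hx, hΔ, hp0, hγ, _⟩ => ⟨by positivity,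
        le_rpow_neg_mul_rpow hx (by positivity) hp0 (hp i).2.le
          ((div_nonneg zero_le_two hr3.le).trans hγ)⟩),
    tendsto_zero_of_eventually_le (by simpa using (hq.pow 2).const_mul (c ^ 2)) (hfacts.mono
      fun i ⟨hx, hΔ, hp0, _, hN, he, hd⟩ => ⟨by positivity,
        div_cube_mul_mul_inv_sq_le hx hN hΔ (by positivity) he hd⟩),
    isLittleO_of_eventually_le_mul (by simpa using hq.const_mul c) (hfacts.mono
      fun i ⟨hx, hΔ, hp0, _, _, _, hd⟩ => ⟨by positivity,
        div_mul_inv_mul_le hx (by positivity) hp0.le hd⟩),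
    isLittleO_of_eventually_le_mul hq (hfacts.mono
      fun i ⟨hx, _, hp0, _⟩ => ⟨by positivity, (inv_mul_sq_mul_rpow_eq hx).le⟩),
    isLittleO_of_eventually_le_mul (by simpa using hq.const_mul c) (hfacts.mono
      fun i ⟨hx, hΔ, hp0, _, hN, he, hd⟩ => ⟨by positivity,
        inv_mul_div_sq_mul_le hx hN (by positivity) hp0.le (by positivity) (by positivity)
          he hd⟩)⟩

theorem estimates_lemma
    (r : ℕ) (hr : 2 ≤ r)
    (nseq : ℕ → ℕ) (hn : Tendsto nseq atTop atTop)
    (H : ∀ i : ℕ, Finset (Finset (Fin (nseq i))))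
    (hunif : ∀ i, UniformH r (H i))
    (p : ℕ → ℝ) (hp : ∀ i, 0 ≤ p i ∧ p i < 1)
    (hedge : ∀ i, (nseq i : ℝ) / r < ((H i).card : ℝ))
    (hpn : Tendsto (fun i => p i * (Nat.choose (nseq i) r : ℝ)) atTop atTop)
    (hcond : Tendsto
      (fun i => (nseq i : ℝ) * p i ^ gammaH r (H i) * (maxDeg (H i) : ℝ) ^ (-4 : ℤ))
      atTop atTop) :
    Tendsto (fun i => (nseq i : ℝ) ^ (((3 : ℝ) - 2 * r) / 2) * (p i)⁻¹ *
        (maxDeg (H i) : ℝ) ^ (4 * r - 6)) atTop (nhds 0) ∧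
    (fun i => (maxDeg (H i) : ℝ)) =o[atTop] (fun i => (nseq i : ℝ) ^ ((1 : ℝ) / 4)) ∧
    Tendsto (fun i => (((H i).card : ℝ) / (Nat.choose (nseq i) r : ℝ)) ^ 3 *
        (Nat.choose (nseq i) r : ℝ) * ((p i)⁻¹) ^ 2) atTop (nhds 0) ∧
    (fun i => ((H i).card : ℝ) / (Nat.choose (nseq i) r : ℝ) * (p i)⁻¹ * (maxDeg (H i) : ℝ))
      =o[atTop] (fun i => (nseq i : ℝ) ^ (-(1 : ℝ) / 2)) ∧
    (fun i => (p i)⁻¹ * (maxDeg (H i) : ℝ) ^ 2 * (nseq i : ℝ) ^ ((2 : ℝ) - r))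
      =o[atTop] (fun i => (nseq i : ℝ) ^ ((1 : ℝ) / 2)) ∧
    (fun i => (p i)⁻¹ * (((H i).card : ℝ) / (Nat.choose (nseq i) r : ℝ)) ^ 2 *
        (Nat.choose (nseq i) r : ℝ))
      =o[atTop] (fun i => (nseq i : ℝ) ^ ((1 : ℝ) / 2)) :=
  estimates_lemma_general r hr nseq hn H hunif p hp hedge hcond
end

section
/- Let r ≥ 2, let H be an r-uniform hypergraph on vertex set [n] with maximum degree Δ, and let p ∈ (0,1). Define ψ(F) = (p^{-1}−1)^{e(F)} · (4·(r−1)!·Δ)^{r(F)} · e^{r(F)+(r−2)·k_r(F)} / n^{r(F)+(r−2)·k_r(F)} and T''_H = Σ''_{F⊆H} ψ(F), where Σ'' runs over all connected good spanning subhypergraphs F of H. Then T''_H ≤ n·e^{2r} · Σ_{s=r+1}^{n} (12·(r!)²·Δ²/n)^{s−1} · p^{−e_H(s)}. -/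
open Finset Filter Asymptotics
open scoped Classical

def hAdj {n : ℕ} (F : Finset (Finset (Fin n))) (u v : Fin n) : Prop :=
  ∃ e ∈ F, u ∈ e ∧ v ∈ e

noncomputable def k1 {n : ℕ} (F : Finset (Finset (Fin n))) : ℕ :=
  (Finset.univ.filter (fun v : Fin n => ∀ e ∈ F, v ∉ e)).card

noncomputable def krC {n : ℕ} (F : Finset (Finset (Fin n))) : ℕ :=
  ((Finset.univ.filter (fun v : Fin n => ∃ e ∈ F, v ∈ e)).image
    (fun v => Finset.univ.filter (fun w => Relation.ReflTransGen (hAdj F) v w))).card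

noncomputable def rpar {n : ℕ} (r : ℕ) (F : Finset (Finset (Fin n))) : ℕ :=
  n - k1 F - (r - 1) * krC F

def Good {n : ℕ} (F : Finset (Finset (Fin n))) : Prop :=
  ∀ e ∈ F, ∃ f ∈ F, f ≠ e ∧ (e ∩ f).Nonempty

/-
A connected good `F` covering a set `W` of `s` vertices has `r(F) + (r - 2) k_r(F) = s - 1` and
`s ≥ r + 1`, so its weight depends only on `e(F)` and `s`. For fixed `W`, summing `(p⁻¹ - 1)^e(F)`
over all `F ⊆ H[W]` gives `p^(-e(H[W])) ≤ p^(-e_H(s))`. Each such `W` is connected in the 2-section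
of `H`, whose degrees are at most `(r - 1) Δ`; breadth-first search encodes `W` by a root, a
monotone parent map and child indices, so there are at most `n 4^(s-1) ((r - 1) Δ)^(s-1)` of them. The
constants combine because `16 e (r - 1) (r - 1)! ≤ 12 (r!)²`.
-/

section ConnectedSets

variable {V : Type*} [DecidableEq V]

def ConnectedIn (N : V → Finset V) (W : Finset V) : Prop :=
  ∀ x ∈ W, ∀ y ∈ W, Relation.ReflTransGen (fun a b => b ∈ W ∧ b ∈ N a) x y

lemma ConnectedIn.exists_boundary {N : V → Finset V} {W U : Finset V} (hW : ConnectedIn N W)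
    {a u : V} (haU : a ∈ U) (haW : a ∈ W) (hu : u ∈ W \ U) :
    ∃ b ∈ U, ∃ x ∈ W \ U, x ∈ N b := by
  have key : ∀ c, Relation.ReflTransGen (fun a b => b ∈ W ∧ b ∈ N a) a c →
      c ∈ U ∨ ∃ b ∈ U, ∃ x ∈ W \ U, x ∈ N b := by
    intro c hc
    induction hc with
    | refl => exact Or.inl haU
    | @tail b c _ hbc ih =>
      refine ih.elim (fun hb => ?_) Or.inr
      by_cases hcU : c ∈ U
      · exact Or.inl hcU
      · exact Or.inr ⟨b, hb, c, mem_sdiff.2 ⟨hbc.1, hcU⟩, hbc.2⟩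
  exact (key u (hW a haW u (mem_sdiff.1 hu).1)).resolve_left (mem_sdiff.1 hu).2

/-- A partial breadth-first enumeration `w 0, …, w j` of `W` with parent pointers `p`; `b` is the
current head of the queue. -/
structure IsBFSPrefix (N : V → Finset V) (W : Finset V) (j : ℕ) (w : ℕ → V) (p : ℕ → ℕ) (b : ℕ) :
    Prop where
  mem : ∀ i ≤ j, w i ∈ W
  injOn : Set.InjOn w (Set.Iic j)
  parent : ∀ i < j, p i ≤ i ∧ w (i + 1) ∈ N (w (p i))
  monotoneOn : MonotoneOn p (Set.Iio j)
  le_head : ∀ i < j, p i ≤ b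
  exhausted : ∀ q < b, ∀ x ∈ W, x ∉ (range (j + 1)).image w → x ∉ N (w q)

lemma Set.InjOn.update_succ {w : ℕ → V} {j : ℕ} {x : V} (hw : Set.InjOn w (Set.Iic j))
    (hx : x ∉ (Finset.range (j + 1)).image w) :
    Set.InjOn (Function.update w (j + 1) x) (Set.Iic (j + 1)) := by
  have hxw : ∀ i ≤ j, x ≠ w i := fun i hi hxi =>
    hx (Finset.mem_image.2 ⟨i, Finset.mem_range.2 (by omega), hxi.symm⟩)
  have hw' : ∀ i ≤ j, Function.update w (j + 1) x i = w i := fun i hi =>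
    Function.update_of_ne (by omega) _ _
  intro i hi k hk hik
  simp only [Set.mem_Iic] at hi hk
  rcases Nat.lt_or_ge i (j + 1) with hij | hij <;> rcases Nat.lt_or_ge k (j + 1) with hkj | hkj
  · rw [hw' i (by omega), hw' k (by omega)] at hik
    exact hw (Set.mem_Iic.2 (by omega)) (Set.mem_Iic.2 (by omega)) hik
  · rw [hw' i (by omega), show k = j + 1 by omega, Function.update_self] at hik
    exact absurd hik.symm (hxw i (by omega))
  · rw [hw' k (by omega), show i = j + 1 by omega, Function.update_self] at hik
    exact absurd hik (hxw k (by omega))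
  · omega

lemma MonotoneOn.update_succ {p : ℕ → ℕ} {j q : ℕ} (hp : MonotoneOn p (Set.Iio j))
    (hq : ∀ i < j, p i ≤ q) : MonotoneOn (Function.update p j q) (Set.Iio (j + 1)) := by
  have hp' : ∀ i < j, Function.update p j q i = p i := fun i hi =>
    Function.update_of_ne (by omega) _ _
  intro i hi k hk hik
  simp only [Set.mem_Iio] at hi hk
  rcases Nat.lt_or_ge k j with hkj | hkj
  · rw [hp' i (by omega), hp' k hkj]
    exact hp (Set.mem_Iio.2 (by omega)) (Set.mem_Iio.2 hkj) hik
  · obtain rfl : k = j := by omega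
    rw [Function.update_self]
    rcases Nat.lt_or_ge i k with hik' | hik'
    · rw [hp' i hik']; exact hq i hik'
    · rw [show i = k by omega, Function.update_self]

namespace IsBFSPrefix

variable {N : V → Finset V} {W : Finset V} {j b : ℕ} {w : ℕ → V} {p : ℕ → ℕ}

lemma start {v : V} (hv : v ∈ W) : IsBFSPrefix N W 0 (fun _ => v) (fun _ => 0) 0 where
  mem _ _ := hv
  injOn _ hi _ hk _ := (Nat.le_zero.1 hi).trans (Nat.le_zero.1 hk).symm
  parent _ h := absurd h (Nat.not_lt_zero _)
  monotoneOn _ h := absurd h (Nat.not_lt_zero _)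
  le_head _ h := absurd h (Nat.not_lt_zero _)
  exhausted _ h := absurd h (Nat.not_lt_zero _)

lemma card_image (h : IsBFSPrefix N W j w p b) : #((range (j + 1)).image w) = j + 1 := by
  rw [card_image_of_injOn, card_range]
  intro i hi k hk
  exact h.injOn (by simpa [Nat.lt_succ_iff] using hi) (by simpa [Nat.lt_succ_iff] using hk)

lemma image_subset (h : IsBFSPrefix N W j w p b) : (range (j + 1)).image w ⊆ W := by
  intro x hx
  obtain ⟨i, hi, rfl⟩ := mem_image.1 hx
  exact h.mem i (Nat.lt_succ_iff.1 (mem_range.1 hi))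

lemma push (h : IsBFSPrefix N W j w p b) {q : ℕ} {x : V} (hqj : q ≤ j) (hbq : b ≤ q)
    (hxU : x ∈ W \ (range (j + 1)).image w) (hxN : x ∈ N (w q))
    (hmin : ∀ k < q, ∀ y ∈ W \ (range (j + 1)).image w, y ∉ N (w k)) :
    IsBFSPrefix N W (j + 1) (Function.update w (j + 1) x) (Function.update p j q) q := by
  have hw' : ∀ i ≤ j, Function.update w (j + 1) x i = w i := fun i hi =>
    Function.update_of_ne (by omega) _ _
  have hp' : ∀ i < j, Function.update p j q i = p i := fun i hi =>
    Function.update_of_ne (by omega) _ _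
  constructor
  · intro i hi
    rcases Nat.lt_or_ge i (j + 1) with hij | hij
    · rw [hw' i (by omega)]; exact h.mem i (by omega)
    · rw [show i = j + 1 by omega, Function.update_self]; exact (mem_sdiff.1 hxU).1
  · exact h.injOn.update_succ (mem_sdiff.1 hxU).2
  · intro i hi
    rcases Nat.lt_or_ge i j with hij | hij
    · have hpi := h.parent i hij
      rw [hp' i hij, hw' (i + 1) (by omega), hw' (p i) (by omega)]
      exact hpi
    · obtain rfl : i = j := by omega
      rw [Function.update_self, Function.update_self, hw' q hqj]
      exact ⟨hqj, hxN⟩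
  · exact h.monotoneOn.update_succ fun i hi => (h.le_head i hi).trans hbq
  · intro i hi
    rcases Nat.lt_or_ge i j with hij | hij
    · rw [hp' i hij]; exact (h.le_head i hij).trans hbq
    · rw [show i = j by omega, Function.update_self]
  · intro k hk y hyW hyU hyN
    refine hmin k hk y (mem_sdiff.2 ⟨hyW, fun hy => hyU ?_⟩) ?_
    · obtain ⟨i, hi, rfl⟩ := mem_image.1 hy
      have hij := mem_range.1 hi
      exact mem_image.2 ⟨i, mem_range.2 (by omega), hw' i (by omega)⟩
    · rwa [hw' k (by omega)] at hyN

/-- Breadth-first search: the next vertex is an unvisited neighbour of the earliest vertex that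
still has one. -/
lemma extend (h : IsBFSPrefix N W j w p b) (hW : ConnectedIn N W) (hj : j + 1 < #W) :
    ∃ w' p' b', IsBFSPrefix N W (j + 1) w' p' b' := by
  set U := (range (j + 1)).image w
  have hU : (W \ U).Nonempty := by
    rw [← card_pos, card_sdiff_of_subset h.image_subset, h.card_image]
    omega
  obtain ⟨u, hu⟩ := hU
  have h0U : w 0 ∈ U := mem_image_of_mem w (mem_range.2 j.succ_pos)
  obtain ⟨_, ha, hfront⟩ := hW.exists_boundary h0U (h.mem 0 j.zero_le) hu
  obtain ⟨q₀, hq₀, rfl⟩ := mem_image.1 ha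
  have hex : ∃ q, q ≤ j ∧ ∃ x ∈ W \ U, x ∈ N (w q) :=
    ⟨q₀, Nat.lt_succ_iff.1 (mem_range.1 hq₀), hfront⟩
  obtain ⟨hqj, x, hxU, hxN⟩ := Nat.find_spec hex
  have hbq : b ≤ Nat.find hex := by
    by_contra! hlt
    exact h.exhausted _ hlt x (mem_sdiff.1 hxU).1 (mem_sdiff.1 hxU).2 hxN
  exact ⟨_, _, _, h.push hqj hbq hxU hxN fun k hk y hy hyN =>
    Nat.find_min hex hk ⟨by omega, y, hy, hyN⟩⟩

end IsBFSPrefix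

lemma ConnectedIn.exists_bfs {N : V → Finset V} {W : Finset V} {m : ℕ} (hW : ConnectedIn N W)
    (hcard : #W = m + 1) :
    ∃ (w : ℕ → V) (p : ℕ → ℕ), (range (m + 1)).image w = W ∧ MonotoneOn p (Set.Iio m) ∧
      ∀ i < m, p i ≤ i ∧ w (i + 1) ∈ N (w (p i)) := by
  obtain ⟨v, hv⟩ : W.Nonempty := by rw [← card_pos]; omega
  have hprefix : ∀ j ≤ m, ∃ w p b, IsBFSPrefix N W j w p b := by
    intro j
    induction j with
    | zero => exact fun _ => ⟨_, _, _, IsBFSPrefix.start hv⟩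
    | succ j ih =>
      intro hj
      obtain ⟨w, p, b, h⟩ := ih (by omega)
      exact h.extend hW (by omega)
  obtain ⟨w, p, b, h⟩ := hprefix m le_rfl
  exact ⟨w, p, eq_of_subset_of_card_le h.image_subset (by rw [h.card_image, hcard]),
    h.monotoneOn, h.parent⟩

lemma eq_of_parent_idxOf_eq {N : V → Finset V} {m : ℕ} {p : ℕ → ℕ} {w w' : ℕ → V}
    (h0 : w 0 = w' 0) (hp : ∀ i < m, p i ≤ i)
    (hw : ∀ i < m, w (i + 1) ∈ N (w (p i)))
    (hidx : ∀ i < m,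
      (N (w (p i))).toList.idxOf (w (i + 1)) = (N (w' (p i))).toList.idxOf (w' (i + 1))) :
    ∀ i ≤ m, w i = w' i := by
  intro i
  induction i using Nat.strong_induction_on with
  | _ i ih =>
    intro hi
    rcases i with _ | i
    · exact h0
    · have hpi := hp i hi
      have hpar : w (p i) = w' (p i) := ih (p i) (by omega) (by omega)
      have := hidx i hi
      rw [hpar] at this
      exact (List.idxOf_inj (mem_toList.2 (hpar ▸ hw i hi))).1 this

lemma card_monotone_fin_le (m : ℕ) :
    #(univ.filter fun f : Fin m → Fin m => Monotone f) ≤ 4 ^ m := by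
  let shift : (Fin m → Fin m) → Finset ℕ := fun f => univ.image fun i => (f i : ℕ) + i
  have hstrict : ∀ f : Fin m → Fin m, Monotone f → StrictMono fun i => (f i : ℕ) + i :=
    fun f hf i k hik => Nat.add_lt_add_of_le_of_lt (hf hik.le) hik
  calc #(univ.filter fun f : Fin m → Fin m => Monotone f)
      ≤ #((range (2 * m)).powersetCard m) := by
        refine card_le_card_of_injOn shift (fun f hf => ?_) (fun f hf g hg hfg => ?_)
        · have hf := hstrict f (mem_filter.1 hf).2
          refine mem_powersetCard.2 ⟨fun x hx => ?_, ?_⟩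
          · obtain ⟨i, -, rfl⟩ := mem_image.1 hx
            have := (f i).2
            have := i.2
            exact mem_range.2 (by omega)
          · rw [card_image_of_injective _ hf.injective, card_univ, Fintype.card_fin]
        · have hf := hstrict f (mem_filter.1 hf).2
          have hg := hstrict g (mem_filter.1 hg).2
          have hrange := congrArg ((↑) : Finset ℕ → Set ℕ) hfg
          simp only [shift, coe_image, coe_univ, Set.image_univ] at hrange
          funext i
          have := congrFun ((hf.range_inj hg).1 hrange) i
          exact Fin.ext (by simpa using this)
    _ = Nat.centralBinom m := by
        rw [card_powersetCard, card_range, Nat.centralBinom_eq_two_mul_choose]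
    _ ≤ 4 ^ m := Nat.centralBinom_le_four_pow m

/-- Breadth-first search encodes a connected `(m+1)`-set by its root, its monotone parent map
`Fin m → Fin m` (at most `4 ^ m` of them) and the position of each new vertex among the `≤ d`
neighbours of its parent. -/
theorem card_le_of_connectedIn [Fintype V] {N : V → Finset V} {d m : ℕ} (hN : ∀ v, #(N v) ≤ d)
    (𝒞 : Finset (Finset V)) (h𝒞 : ∀ W ∈ 𝒞, #W = m + 1 ∧ ConnectedIn N W) :
    #𝒞 ≤ Fintype.card V * (4 ^ m * d ^ m) := by
  have hcode : ∀ W ∈ 𝒞, ∃ c : V × (Fin m → Fin m) × (Fin m → Fin d), Monotone c.2.1 ∧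
      ∃ (w : ℕ → V) (p : ℕ → ℕ), (range (m + 1)).image w = W ∧ c.1 = w 0 ∧
        (∀ i : Fin m, (c.2.1 i : ℕ) = p i ∧
          (c.2.2 i : ℕ) = (N (w (p i))).toList.idxOf (w (i + 1))) ∧
        ∀ i < m, p i ≤ i ∧ w (i + 1) ∈ N (w (p i)) := by
    intro W hW
    obtain ⟨w, p, himage, hmono, hpar⟩ := (h𝒞 W hW).2.exists_bfs (h𝒞 W hW).1
    have hidx (i : Fin m) : (N (w (p i))).toList.idxOf (w (i + 1)) < d :=
      (List.idxOf_lt_length_of_mem (mem_toList.2 (hpar i i.2).2)).trans_le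
        ((length_toList _).trans_le (hN _))
    refine ⟨⟨w 0, fun i => ⟨p i, by have := (hpar i i.2).1; omega⟩,
      fun i => ⟨_, hidx i⟩⟩, fun i k hik => ?_, w, p, himage, rfl, fun i => ⟨rfl, rfl⟩, hpar⟩
    exact Fin.mk_le_mk.2 (hmono (Set.mem_Iio.2 i.2) (Set.mem_Iio.2 k.2) hik)
  rcases 𝒞.eq_empty_or_nonempty with rfl | ⟨W₀, hW₀⟩
  · simp
  have : Nonempty (V × (Fin m → Fin m) × (Fin m → Fin d)) := ⟨(hcode W₀ hW₀).choose⟩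
  choose! code hmono hcode using hcode
  calc #𝒞 ≤ #(univ ×ˢ ((univ.filter fun π : Fin m → Fin m => Monotone π) ×ˢ
        (univ : Finset (Fin m → Fin d)))) := by
        refine card_le_card_of_injOn code
          (fun W hW => by simp [hmono W hW]) (fun W hW W' hW' heq => ?_)
        obtain ⟨w, p, rfl, h0, hc, hpar⟩ := hcode W hW
        obtain ⟨w', p', rfl, h0', hc', -⟩ := hcode W' hW'
        have hp : ∀ i < m, p' i = p i := fun i hi => by
          rw [← (hc ⟨i, hi⟩).1, ← (hc' ⟨i, hi⟩).1, heq]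
        refine image_congr fun i hi => eq_of_parent_idxOf_eq (h0.symm.trans (heq ▸ h0'))
          (fun i hi => (hpar i hi).1) (fun i hi => (hpar i hi).2) (fun i hi => ?_) i
          (Nat.lt_succ_iff.1 (mem_range.1 hi))
        rw [← (hc ⟨i, hi⟩).2, ← hp i hi, ← (hc' ⟨i, hi⟩).2, heq]
    _ ≤ Fintype.card V * (4 ^ m * d ^ m) := by
        simp only [card_product, card_univ, Fintype.card_fun, Fintype.card_fin]
        exact Nat.mul_le_mul_left _ (Nat.mul_le_mul_right _ (card_monotone_fin_le m))

end ConnectedSets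

section Hypergraph

variable {n : ℕ}

noncomputable def covered (F : Finset (Finset (Fin n))) : Finset (Fin n) :=
  univ.filter fun v => ∃ e ∈ F, v ∈ e

noncomputable def nbhd (H : Finset (Finset (Fin n))) (v : Fin n) : Finset (Fin n) :=
  univ.filter fun u => u ≠ v ∧ hAdj H v u

lemma subset_covered {F : Finset (Finset (Fin n))} {e : Finset (Fin n)} (he : e ∈ F) :
    e ⊆ covered F :=
  fun v hv => mem_filter.2 ⟨mem_univ v, e, he, hv⟩

lemma k1_add_card_covered (F : Finset (Finset (Fin n))) : k1 F + #(covered F) = n := by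
  simpa [k1, covered] using
    card_filter_add_card_filter_not (s := univ) (fun v : Fin n => ∀ e ∈ F, v ∉ e)

lemma covered_nonempty_of_krC_eq_one {F : Finset (Finset (Fin n))} (hk : krC F = 1) :
    (covered F).Nonempty := by
  rw [krC, card_eq_one] at hk
  obtain ⟨C, hC⟩ := hk
  exact image_nonempty.1 (hC ▸ singleton_nonempty C)

lemma reflTransGen_of_krC_eq_one {F : Finset (Finset (Fin n))} (hk : krC F = 1) {x y : Fin n}
    (hx : x ∈ covered F) (hy : y ∈ covered F) : Relation.ReflTransGen (hAdj F) x y := by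
  rw [krC, card_eq_one] at hk
  obtain ⟨C, hC⟩ := hk
  have hcomp : ∀ v ∈ covered F,
      (univ.filter fun w => Relation.ReflTransGen (hAdj F) v w) = C := fun v hv =>
    mem_singleton.1 (hC ▸ mem_image_of_mem _ hv)
  have hyy : y ∈ univ.filter fun w => Relation.ReflTransGen (hAdj F) y w :=
    mem_filter.2 ⟨mem_univ y, .refl⟩
  rw [hcomp y hy, ← hcomp x hx] at hyy
  exact (mem_filter.1 hyy).2

lemma connectedIn_covered {H F : Finset (Finset (Fin n))} (hFH : F ⊆ H) (hk : krC F = 1) :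
    ConnectedIn (nbhd H) (covered F) := by
  intro x hx y hy
  induction reflTransGen_of_krC_eq_one hk hx hy with
  | refl => exact .refl
  | @tail b c _ hbc ih =>
    obtain ⟨e, he, hbe, hce⟩ := hbc
    have ih := ih (subset_covered he hbe)
    by_cases hbc : c = b
    · exact hbc ▸ ih
    · exact ih.tail ⟨subset_covered he hce,
        mem_filter.2 ⟨mem_univ c, hbc, e, hFH he, hbe, hce⟩⟩

lemma card_nbhd_le {r Δ : ℕ} {H : Finset (Finset (Fin n))} (hunif : UniformH r H)
    (hΔ : maxDeg H ≤ Δ) (v : Fin n) : #(nbhd H v) ≤ (r - 1) * Δ := by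
  have hdeg : #(H.filter fun e => v ∈ e) ≤ Δ :=
    (le_sup (f := fun v => #(H.filter fun e => v ∈ e)) (mem_univ v)).trans hΔ
  calc #(nbhd H v) ≤ #((H.filter fun e => v ∈ e).biUnion fun e => e.erase v) := by
        refine card_le_card fun u hu => ?_
        obtain ⟨-, hne, e, he, hve, hue⟩ := mem_filter.1 hu
        exact mem_biUnion.2 ⟨e, mem_filter.2 ⟨he, hve⟩, mem_erase.2 ⟨hne, hue⟩⟩
    _ ≤ ∑ e ∈ H.filter fun e => v ∈ e, #(e.erase v) := card_biUnion_le
    _ = ∑ e ∈ H.filter fun e => v ∈ e, (r - 1) := sum_congr rfl fun e he => by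
        rw [card_erase_of_mem (mem_filter.1 he).2, hunif e (mem_filter.1 he).1]
    _ ≤ (r - 1) * Δ := by
        rw [sum_const, smul_eq_mul, mul_comm]
        exact Nat.mul_le_mul_left _ hdeg

lemma one_le_maxDeg {H : Finset (Finset (Fin n))} {e : Finset (Fin n)} {v : Fin n} (he : e ∈ H)
    (hv : v ∈ e) : 1 ≤ maxDeg H :=
  (card_pos.2 ⟨e, mem_filter.2 ⟨he, hv⟩⟩).trans_le
    (le_sup (f := fun v => #(H.filter fun e => v ∈ e)) (mem_univ v))

/-- A good `F` has a second edge, which is not contained in `e`. -/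
lemma card_covered_ge {r : ℕ} {H F : Finset (Finset (Fin n))} (hunif : UniformH r H)
    (hFH : F ⊆ H) (hgood : Good F) {e : Finset (Fin n)} (he : e ∈ F) : r + 1 ≤ #(covered F) := by
  obtain ⟨f, hf, hfe, -⟩ := hgood e he
  obtain ⟨x, hxf, hxe⟩ := not_subset.1 fun hfe' : f ⊆ e =>
    hfe (eq_of_subset_of_card_le hfe' (by rw [hunif e (hFH he), hunif f (hFH hf)]))
  calc r + 1 = #(insert x e) := by rw [card_insert_of_notMem hxe, hunif e (hFH he)]
    _ ≤ #(covered F) :=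
      card_le_card (insert_subset (subset_covered hf hxf) (subset_covered he))

lemma card_covered_mem_Icc {r : ℕ} {H F : Finset (Finset (Fin n))} (hunif : UniformH r H)
    (hFH : F ⊆ H) (hgood : Good F) (hk : krC F = 1) : #(covered F) ∈ Icc (r + 1) n := by
  obtain ⟨-, e, he, -⟩ := mem_filter.1 (covered_nonempty_of_krC_eq_one hk).choose_spec
  exact mem_Icc.2
    ⟨card_covered_ge hunif hFH hgood he, (card_le_univ _).trans_eq (Fintype.card_fin n)⟩

lemma card_filter_subset_le_eHmax (H : Finset (Finset (Fin n))) {W : Finset (Fin n)} {s : ℕ}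
    (hW : #W = s) : #(H.filter fun e => e ⊆ W) ≤ eHmax H s :=
  le_sup (f := fun W => #(H.filter fun e => e ⊆ W))
    (mem_powersetCard.2 ⟨subset_univ W, hW⟩)

lemma rpar_of_krC_eq_one {r : ℕ} {F : Finset (Finset (Fin n))} (hk : krC F = 1) :
    rpar r F = #(covered F) - (r - 1) := by
  have := k1_add_card_covered F
  rw [rpar, hk, mul_one]
  omega

/-- Grouping the `F` by the set `W` they cover: there are few connected `W`, and the `F` covering
a given `W` are among the subsets of the at most `e_H(m+1)` edges of `H` inside `W`. -/
lemma sum_pow_card_le_of_card_covered {r Δ m : ℕ} {H : Finset (Finset (Fin n))}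
    (hunif : UniformH r H) (hΔ : maxDeg H ≤ Δ) {x : ℝ} (hx : 0 ≤ x)
    (𝓢 : Finset (Finset (Finset (Fin n))))
    (h𝓢 : ∀ F ∈ 𝓢, F ⊆ H ∧ krC F = 1 ∧ #(covered F) = m + 1) :
    ∑ F ∈ 𝓢, x ^ #F ≤ (n * (4 ^ m * ((r - 1) * Δ) ^ m) : ℕ) * (1 + x) ^ eHmax H (m + 1) := by
  set 𝒞 := 𝓢.image covered
  have hfiber : ∀ W ∈ 𝒞, ∑ F ∈ 𝓢 with covered F = W, x ^ #F ≤ (1 + x) ^ eHmax H (m + 1) := by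
    intro W hW
    obtain ⟨F₀, hF₀, rfl⟩ := mem_image.1 hW
    calc ∑ F ∈ 𝓢 with covered F = covered F₀, x ^ #F
        ≤ ∑ F ∈ (H.filter fun e => e ⊆ covered F₀).powerset, x ^ #F := by
          refine sum_le_sum_of_subset_of_nonneg (fun F hF => ?_) fun _ _ _ => pow_nonneg hx _
          obtain ⟨hF, hcov⟩ := mem_filter.1 hF
          exact mem_powerset.2 fun e he =>
            mem_filter.2 ⟨(h𝓢 F hF).1 he, hcov ▸ subset_covered he⟩
      _ = (x + 1) ^ #(H.filter fun e => e ⊆ covered F₀) := by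
          simpa using sum_pow_mul_eq_add_pow x 1 (H.filter fun e => e ⊆ covered F₀)
      _ ≤ (1 + x) ^ eHmax H (m + 1) := by
          rw [add_comm]
          exact pow_le_pow_right₀ (by linarith)
            (card_filter_subset_le_eHmax H (h𝓢 F₀ hF₀).2.2)
  have hcount : #𝒞 ≤ n * (4 ^ m * ((r - 1) * Δ) ^ m) := by
    simpa using card_le_of_connectedIn (card_nbhd_le hunif hΔ) 𝒞 fun W hW => by
      obtain ⟨F, hF, rfl⟩ := mem_image.1 hW
      exact ⟨(h𝓢 F hF).2.2, connectedIn_covered (h𝓢 F hF).1 (h𝓢 F hF).2.1⟩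
  calc ∑ F ∈ 𝓢, x ^ #F = ∑ W ∈ 𝒞, ∑ F ∈ 𝓢 with covered F = W, x ^ #F :=
        (sum_fiberwise_of_maps_to (fun F hF => mem_image_of_mem covered hF) _).symm
    _ ≤ #𝒞 • (1 + x) ^ eHmax H (m + 1) := sum_le_card_nsmul _ _ _ hfiber
    _ ≤ _ := by
        rw [nsmul_eq_mul]
        gcongr

lemma weight_le {r Δ : ℕ} (hr : 2 ≤ r) {H F : Finset (Finset (Fin n))} (hunif : UniformH r H)
    (hΔ : maxDeg H ≤ Δ) (hFH : F ⊆ H) (hgood : Good F) (hk : krC F = 1) {q : ℝ} (hq : 0 ≤ q) :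
    q ^ #F * (4 * ((r - 1).factorial : ℝ) * Δ) ^ rpar r F *
        Real.exp 1 ^ (rpar r F + (r - 2) * krC F) / (n : ℝ) ^ (rpar r F + (r - 2) * krC F)
      ≤ q ^ #F * (4 * ((r - 1).factorial : ℝ) * Δ * Real.exp 1 / n) ^ (#(covered F) - 1) := by
  obtain ⟨v, hv⟩ := covered_nonempty_of_krC_eq_one hk
  obtain ⟨-, e, he, hve⟩ := mem_filter.1 hv
  have hs := card_covered_ge hunif hFH hgood he
  have hA : (1 : ℝ) ≤ 4 * ((r - 1).factorial : ℝ) * Δ := by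
    have hfac : (1 : ℝ) ≤ (r - 1).factorial := by exact_mod_cast (r - 1).factorial_pos
    have hΔ1 : (1 : ℝ) ≤ Δ := by exact_mod_cast (one_le_maxDeg (hFH he) hve).trans hΔ
    nlinarith
  rw [hk, rpar_of_krC_eq_one hk, show #(covered F) - (r - 1) + (r - 2) * 1 = #(covered F) - 1 by
    omega]
  calc q ^ #F * (4 * ((r - 1).factorial : ℝ) * Δ) ^ (#(covered F) - (r - 1)) *
        Real.exp 1 ^ (#(covered F) - 1) / (n : ℝ) ^ (#(covered F) - 1)
      ≤ q ^ #F * (4 * ((r - 1).factorial : ℝ) * Δ) ^ (#(covered F) - 1) *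
        Real.exp 1 ^ (#(covered F) - 1) / (n : ℝ) ^ (#(covered F) - 1) := by
        gcongr q ^ _ * ?_ * _ / _
        exact pow_le_pow_right₀ hA (by omega)
    _ = _ := by rw [div_pow, mul_pow _ (Real.exp 1)]; ring

end Hypergraph

lemma four_mul_sub_one_mul_factorial_le (r : ℕ) :
    4 * ((r - 1) * (r - 1).factorial) ≤ r.factorial ^ 2 := by
  rcases r with _ | k
  · simp
  · have hk : 4 * k ≤ (k + 1) ^ 2 := by nlinarith [sq_nonneg ((k : ℤ) - 1)]
    have hfac := k.factorial_pos
    rw [Nat.factorial_succ, Nat.add_sub_cancel]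
    calc 4 * (k * k.factorial) = 4 * k * k.factorial * 1 := by ring
      _ ≤ (k + 1) ^ 2 * k.factorial * k.factorial := by gcongr; exact hfac
      _ = ((k + 1) * k.factorial) ^ 2 := by ring

lemma count_mul_weight_le (r n Δ m : ℕ) :
    ((n * (4 ^ m * ((r - 1) * Δ) ^ m) : ℕ) : ℝ) *
        (4 * ((r - 1).factorial : ℝ) * Δ * Real.exp 1 / n) ^ m
      ≤ n * Real.exp (2 * r) * (12 * (r.factorial : ℝ) ^ 2 * (Δ : ℝ) ^ 2 / n) ^ m := by
  have hfac : (4 * (((r - 1 : ℕ) : ℝ) * (r - 1).factorial) : ℝ) ≤ (r.factorial : ℝ) ^ 2 := by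
    exact_mod_cast four_mul_sub_one_mul_factorial_le r
  have he : Real.exp 1 ≤ 3 := Real.exp_one_lt_d9.le.trans (by norm_num)
  have hbase : 4 * (((r - 1 : ℕ) : ℝ) * Δ) * (4 * ((r - 1).factorial : ℝ) * Δ * Real.exp 1 / n)
      ≤ 12 * (r.factorial : ℝ) ^ 2 * (Δ : ℝ) ^ 2 / n :=
    calc _ = 4 * (((r - 1 : ℕ) : ℝ) * (r - 1).factorial) * (4 * Real.exp 1) * (Δ : ℝ) ^ 2 / n := by
          ring
      _ ≤ (r.factorial : ℝ) ^ 2 * (4 * 3) * (Δ : ℝ) ^ 2 / n := by gcongr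
      _ = _ := by ring
  calc _ = n * (4 * (((r - 1 : ℕ) : ℝ) * Δ) *
        (4 * ((r - 1).factorial : ℝ) * Δ * Real.exp 1 / n)) ^ m := by
        push_cast
        rw [mul_pow, mul_pow]
        ring
    _ ≤ n * (12 * (r.factorial : ℝ) ^ 2 * (Δ : ℝ) ^ 2 / n) ^ m := by gcongr
    _ ≤ _ := by
        have hexp : 1 ≤ Real.exp (2 * r) := Real.one_le_exp (by positivity)
        have hX : 0 ≤ n * (12 * (r.factorial : ℝ) ^ 2 * (Δ : ℝ) ^ 2 / n) ^ m := by positivity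
        nlinarith

theorem Tsecond_bound
    (r n Δ : ℕ) (hr : 2 ≤ r) (p : ℝ) (hp : 0 < p) (hp1 : p < 1)
    (H : Finset (Finset (Fin n))) (hunif : UniformH r H) (hΔ : maxDeg H ≤ Δ) :
    ∑ F ∈ H.powerset.filter (fun F => Good F ∧ krC F = 1),
        (p⁻¹ - 1) ^ F.card * (4 * ((r - 1).factorial : ℝ) * Δ) ^ rpar r F *
          Real.exp 1 ^ (rpar r F + (r - 2) * krC F) /
          (n : ℝ) ^ (rpar r F + (r - 2) * krC F)
      ≤ (n : ℝ) * Real.exp (2 * r) *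
        ∑ s ∈ Finset.Icc (r + 1) n,
          (12 * ((r.factorial : ℝ)) ^ 2 * (Δ : ℝ) ^ 2 / (n : ℝ)) ^ (s - 1) *
            p ^ (-(eHmax H s : ℤ)) := by
  have hq : 0 ≤ p⁻¹ - 1 := sub_nonneg.2 ((one_le_inv₀ hp).2 hp1.le)
  set S := H.powerset.filter fun F => Good F ∧ krC F = 1
  set B := 4 * ((r - 1).factorial : ℝ) * Δ * Real.exp 1 / n
  have hS : ∀ F ∈ S, F ⊆ H ∧ Good F ∧ krC F = 1 := fun F hF =>
    ⟨mem_powerset.1 (mem_filter.1 hF).1, (mem_filter.1 hF).2⟩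
  have hmaps : ∀ F ∈ S, #(covered F) ∈ Icc (r + 1) n := fun F hF =>
    card_covered_mem_Icc hunif (hS F hF).1 (hS F hF).2.1 (hS F hF).2.2
  calc _ ≤ ∑ F ∈ S, (p⁻¹ - 1) ^ #F * B ^ (#(covered F) - 1) :=
        sum_le_sum fun F hF => weight_le hr hunif hΔ (hS F hF).1 (hS F hF).2.1 (hS F hF).2.2 hq
    _ = ∑ s ∈ Icc (r + 1) n, (∑ F ∈ S with #(covered F) = s, (p⁻¹ - 1) ^ #F) * B ^ (s - 1) := by
        rw [← sum_fiberwise_of_maps_to hmaps]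
        refine sum_congr rfl fun s _ => ?_
        rw [sum_mul]
        exact sum_congr rfl fun F hF => by rw [(mem_filter.1 hF).2]
    _ ≤ ∑ s ∈ Icc (r + 1) n, ((n * (4 ^ (s - 1) * ((r - 1) * Δ) ^ (s - 1)) : ℕ) : ℝ) *
          p⁻¹ ^ eHmax H s * B ^ (s - 1) := by
        gcongr with s hs
        have hs1 : s - 1 + 1 = s := by have := (mem_Icc.1 hs).1; omega
        simpa [hs1] using sum_pow_card_le_of_card_covered (m := s - 1) hunif hΔ hq
          (S.filter fun F => #(covered F) = s) fun F hF =>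
            have hF' := mem_filter.1 hF
            ⟨(hS F hF'.1).1, (hS F hF'.1).2.2, hs1 ▸ hF'.2⟩
    _ ≤ _ := by
        rw [mul_sum]
        refine sum_le_sum fun s _ => ?_
        have := mul_le_mul_of_nonneg_right (count_mul_weight_le r n Δ (s - 1))
          (by positivity : (0 : ℝ) ≤ p⁻¹ ^ eHmax H s)
        rw [zpow_neg, zpow_natCast, ← inv_pow]
        linarith
end

section
/- Let r ≥ 3 and Δ ≥ 1 be integers and let G be an F^{(2)}(n,Δ)-universal graph. Then the r-uniform hypergraph H_r(G) is universal for the family of r-uniform hypergraphs F on n vertices with σ(F) ≤ Δ, i.e., every such F occurs as a copy in H_r(G). -/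
open Finset Filter Asymptotics
open scoped Classical

def ContainsCopy {α β : Type*} [DecidableEq α] [DecidableEq β]
    (F : Finset (Finset α)) (H : Finset (Finset β)) : Prop :=
  ∃ φ : α ↪ β, ∀ e ∈ F, e.map φ ∈ H

def IsUniversal (nF r Δ : ℕ) {V : Type*} [Fintype V] [DecidableEq V]
    (H : Finset (Finset V)) : Prop :=
  ∀ F : Finset (Finset (Fin nF)), UniformH r F → maxDeg F ≤ Δ → ContainsCopy F H

def Hits {V : Type*} (G H : Finset (Finset V)) : Prop :=
  ∀ f ∈ H, ∃ e ∈ G, e ⊆ f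

noncomputable def sigmaH {V : Type*} [Fintype V] [DecidableEq V]
    (H : Finset (Finset V)) : ℕ :=
  sInf {d : ℕ | ∃ G : Finset (Finset V), UniformH 2 G ∧ Hits G H ∧ maxDeg G = d}

def Hr (r : ℕ) {V : Type*} [Fintype V] [DecidableEq V] (G : Finset (Finset V)) :
    Finset (Finset V) :=
  (Finset.powersetCard r (Finset.univ : Finset V)).filter (fun f => ∃ e ∈ G, e ⊆ f)

theorem Hr_universal (r Δ n : ℕ) (hr : 3 ≤ r) (hΔ : 1 ≤ Δ)
    {V : Type*} [Fintype V] [DecidableEq V]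
    (G : Finset (Finset V)) (hG : UniformH 2 G) (hGuniv : IsUniversal n 2 Δ G) :
    ∀ F : Finset (Finset (Fin n)), UniformH r F → sigmaH F ≤ Δ →
      ContainsCopy F (Hr r G) := by
  intro F hF hsig
  have hne : {d : ℕ | ∃ G' : Finset (Finset (Fin n)), UniformH 2 G' ∧ Hits G' F ∧
      maxDeg G' = d}.Nonempty := by
    refine ⟨maxDeg (Finset.powersetCard 2 (Finset.univ : Finset (Fin n))),
      Finset.powersetCard 2 Finset.univ, ?_, ?_, rfl⟩
    · intro e he; exact (Finset.mem_powersetCard.1 he).2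
    · intro f hf
      obtain ⟨e, he, hcard⟩ := Finset.exists_subset_card_eq
        (show 2 ≤ f.card by rw [hF f hf]; omega)
      exact ⟨e, Finset.mem_powersetCard.2 ⟨Finset.subset_univ _, hcard⟩, he⟩
  obtain ⟨G', hG'u, hG'hits, hG'deg⟩ := Nat.sInf_mem hne
  obtain ⟨φ, hφ⟩ := hGuniv G' hG'u (hG'deg ▸ hsig)
  refine ⟨φ, fun f hf => ?_⟩
  rw [Hr, Finset.mem_filter, Finset.mem_powersetCard]
  obtain ⟨e, heG', hef⟩ := hG'hits f hf
  exact ⟨⟨Finset.subset_univ _, by rw [Finset.card_map, hF f hf]⟩,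
    ⟨e.map φ, hφ e heG', Finset.map_subset_map.2 hef⟩⟩
end

section
/- Let Δ ≥ 1 and r ≥ 3 be integers. If G is an F^{(2)}(n,(r−1)Δ)-universal graph, then the r-uniform hypergraph K_r(G), whose edges are the vertex sets of the copies of the complete graph K_r in G, is F^{(r)}(n,Δ)-universal. Moreover, K_r(G) has at most e(G)·Δ(G)^{r−2} edges. -/
open Finset Filter Asymptotics
open scoped Classical

def Kr (r : ℕ) {V : Type*} [Fintype V] [DecidableEq V] (G : Finset (Finset V)) :
    Finset (Finset V) :=
  (Finset.powersetCard r (Finset.univ : Finset V)).filter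
    (fun f => ∀ u ∈ f, ∀ v ∈ f, u ≠ v → ({u, v} : Finset V) ∈ G)

theorem Kr_universal (r Δ n : ℕ) (hr : 3 ≤ r) (hΔ : 1 ≤ Δ)
    {V : Type*} [Fintype V] [DecidableEq V]
    (G : Finset (Finset V)) (hG : UniformH 2 G)
    (hGuniv : IsUniversal n 2 ((r - 1) * Δ) G) :
    IsUniversal n r Δ (Kr r G) ∧ (Kr r G).card ≤ G.card * (maxDeg G) ^ (r - 2) := by
  constructor
  · -- universality
    intro F hF hFdeg
    set F2 : Finset (Finset (Fin n)) := F.biUnion (fun e => e.powersetCard 2) with hF2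
    have hF2u : UniformH 2 F2 := by
      intro p hp
      simp only [hF2, mem_biUnion] at hp
      obtain ⟨e, -, hp⟩ := hp
      exact (mem_powersetCard.mp hp).2
    have hF2deg : maxDeg F2 ≤ (r - 1) * Δ := by
      unfold maxDeg
      apply Finset.sup_le
      intro v _
      have hsub : F2.filter (fun p => v ∈ p) ⊆
          (F.filter (fun e => v ∈ e)).biUnion
            (fun e => (e.powersetCard 2).filter (fun p => v ∈ p)) := by
        intro p hp
        simp only [hF2, mem_filter, mem_biUnion] at hp ⊢
        obtain ⟨⟨e, he, hpe⟩, hv⟩ := hp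
        exact ⟨e, ⟨he, (mem_powersetCard.mp hpe).1 hv⟩, hpe, hv⟩
      calc (F2.filter (fun p => v ∈ p)).card
          ≤ ((F.filter (fun e => v ∈ e)).biUnion
              (fun e => (e.powersetCard 2).filter (fun p => v ∈ p))).card :=
            card_le_card hsub
        _ ≤ ∑ e ∈ F.filter (fun e => v ∈ e),
              ((e.powersetCard 2).filter (fun p => v ∈ p)).card := card_biUnion_le
        _ ≤ ∑ _e ∈ F.filter (fun e => v ∈ e), (r - 1) := by
            apply Finset.sum_le_sum
            intro e he
            obtain ⟨heF, hve⟩ := mem_filter.mp he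
            have hmaps : ∀ p ∈ (e.powersetCard 2).filter (fun p => v ∈ p),
                p.erase v ∈ (e.erase v).powersetCard 1 := by
              intro p hp
              obtain ⟨hpe, hvp⟩ := mem_filter.mp hp
              obtain ⟨hsub', hc⟩ := mem_powersetCard.mp hpe
              refine mem_powersetCard.mpr ⟨?_, ?_⟩
              · exact Finset.erase_subset_erase v hsub'
              · rw [Finset.card_erase_of_mem hvp, hc]
            have hinj : Set.InjOn (fun p : Finset (Fin n) => p.erase v)
                ↑((e.powersetCard 2).filter (fun p => v ∈ p)) := by
              intro p hp q hq hpq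
              simp only [Finset.coe_filter, Set.mem_setOf_eq] at hp hq
              have hpq' : p.erase v = q.erase v := hpq
              have hp' := Finset.insert_erase hp.2
              have hq' := Finset.insert_erase hq.2
              rw [← hp', ← hq', hpq']
            have hcard := Finset.card_le_card_of_injOn (fun p : Finset (Fin n) => p.erase v) hmaps hinj
            rwa [Finset.card_powersetCard, Finset.card_erase_of_mem hve, hF e heF,
              Nat.choose_one_right] at hcard
        _ = (F.filter (fun e => v ∈ e)).card * (r - 1) := by
            rw [Finset.sum_const, smul_eq_mul]
        _ ≤ Δ * (r - 1) := by
            apply Nat.mul_le_mul_right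
            have h1 : (F.filter (fun e => v ∈ e)).card ≤ maxDeg F :=
              Finset.le_sup (f := fun v => (F.filter (fun e => v ∈ e)).card) (mem_univ v)
            exact le_trans h1 hFdeg
        _ = (r - 1) * Δ := mul_comm _ _
    obtain ⟨φ, hφ⟩ := hGuniv F2 hF2u hF2deg
    refine ⟨φ, fun e he => ?_⟩
    rw [Kr, mem_filter, mem_powersetCard]
    refine ⟨⟨subset_univ _, by rw [card_map]; exact hF e he⟩, ?_⟩
    intro u' hu' v' hv' hne
    obtain ⟨u, hu, rfl⟩ := Finset.mem_map.mp hu'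
    obtain ⟨v, hv, rfl⟩ := Finset.mem_map.mp hv'
    have huv : u ≠ v := fun h => hne (by rw [h])
    have hpair : ({u, v} : Finset (Fin n)) ∈ F2 := by
      rw [hF2, mem_biUnion]
      refine ⟨e, he, mem_powersetCard.mpr ⟨?_, Finset.card_pair huv⟩⟩
      intro x hx
      simp only [mem_insert, mem_singleton] at hx
      rcases hx with rfl | rfl <;> assumption
    have hm := hφ _ hpair
    rwa [Finset.map_insert, Finset.map_singleton] at hm
  · -- counting
    have hKr : ∀ f ∈ Kr r G, f.card = r ∧ ∀ u ∈ f, ∀ v ∈ f, u ≠ v →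
        ({u, v} : Finset V) ∈ G := by
      intro f hf
      rw [Kr, mem_filter, mem_powersetCard] at hf
      exact ⟨hf.1.2, hf.2⟩
    have hex : ∀ f ∈ Kr r G, ∃ e, e ∈ G ∧ e ⊆ f := by
      intro f hf
      obtain ⟨hcard, hcl⟩ := hKr f hf
      have h2 : 1 < f.card := by omega
      obtain ⟨u, hu, v, hv, huv⟩ := Finset.one_lt_card.mp h2
      refine ⟨{u, v}, hcl u hu v hv huv, ?_⟩
      intro x hx
      simp only [mem_insert, mem_singleton] at hx
      rcases hx with rfl | rfl <;> assumption
    classical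
    set t : Finset V → Finset V :=
      fun f => if h : ∃ e, e ∈ G ∧ e ⊆ f then h.choose else ∅ with ht
    have htspec : ∀ f ∈ Kr r G, t f ∈ G ∧ t f ⊆ f := by
      intro f hf
      have h := hex f hf
      simp only [ht, dif_pos h]
      exact h.choose_spec
    have hmap : ∀ f ∈ Kr r G, t f ∈ G := fun f hf => (htspec f hf).1
    rw [Finset.card_eq_sum_card_fiberwise hmap]
    have hfib : ∀ e ∈ G, ((Kr r G).filter (fun f => t f = e)).card ≤ (maxDeg G) ^ (r - 2) := by
      intro e heG
      have he2 : e.card = 2 := hG e heG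
      obtain ⟨w0, hw0⟩ : e.Nonempty := Finset.card_pos.mp (by omega)
      set N : Finset V := (G.filter (fun g => w0 ∈ g)).biUnion (fun g => g.erase w0) with hN
      have hNcard : N.card ≤ maxDeg G := by
        calc N.card ≤ ∑ g ∈ G.filter (fun g => w0 ∈ g), (g.erase w0).card := card_biUnion_le
          _ ≤ ∑ _g ∈ G.filter (fun g => w0 ∈ g), 1 := by
              apply Finset.sum_le_sum
              intro g hg
              obtain ⟨hgG, hwg⟩ := mem_filter.mp hg
              rw [Finset.card_erase_of_mem hwg, hG g hgG]
          _ = (G.filter (fun g => w0 ∈ g)).card := by rw [Finset.sum_const, smul_eq_mul, mul_one]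
          _ ≤ maxDeg G := Finset.le_sup (f := fun v => (G.filter (fun e => v ∈ e)).card) (mem_univ w0)
      have hmaps : ∀ f ∈ (Kr r G).filter (fun f => t f = e),
          f \ e ∈ N.powersetCard (r - 2) := by
        intro f hf
        obtain ⟨hfK, hte⟩ := mem_filter.mp hf
        obtain ⟨hcard, hcl⟩ := hKr f hfK
        have hef : e ⊆ f := hte ▸ (htspec f hfK).2
        refine mem_powersetCard.mpr ⟨?_, ?_⟩
        · intro w hw
          obtain ⟨hwf, hwe⟩ := Finset.mem_sdiff.mp hw
          have hwne : w0 ≠ w := fun h => hwe (h ▸ hw0)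
          have hedge : ({w0, w} : Finset V) ∈ G := hcl w0 (hef hw0) w hwf (hwne)
          rw [hN, mem_biUnion]
          exact ⟨{w0, w}, mem_filter.mpr ⟨hedge, mem_insert_self _ _⟩,
            Finset.mem_erase.mpr ⟨fun h => hwne h.symm, by simp⟩⟩
        · rw [Finset.card_sdiff_of_subset hef, hcard, he2]
      have hinj : Set.InjOn (fun f => f \ e) ↑((Kr r G).filter (fun f => t f = e)) := by
        intro f hf f' hf' hff'
        simp only [Finset.coe_filter, Set.mem_setOf_eq] at hf hf'
        have hef : e ⊆ f := hf.2 ▸ (htspec f hf.1).2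
        have hef' : e ⊆ f' := hf'.2 ▸ (htspec f' hf'.1).2
        have hff'' : f \ e = f' \ e := hff'
        rw [← Finset.union_sdiff_of_subset hef, ← Finset.union_sdiff_of_subset hef', hff'']
      calc ((Kr r G).filter (fun f => t f = e)).card
          ≤ (N.powersetCard (r - 2)).card := Finset.card_le_card_of_injOn (fun f => f \ e) hmaps hinj
        _ = N.card.choose (r - 2) := Finset.card_powersetCard _ _
        _ ≤ (maxDeg G).choose (r - 2) := Nat.choose_mono _ hNcard
        _ ≤ (maxDeg G) ^ (r - 2) := Nat.choose_le_pow _ _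
    calc ∑ e ∈ G, ((Kr r G).filter (fun f => t f = e)).card
        ≤ ∑ _e ∈ G, (maxDeg G) ^ (r - 2) := Finset.sum_le_sum hfib
      _ = G.card * (maxDeg G) ^ (r - 2) := by rw [Finset.sum_const, smul_eq_mul]
end
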